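/- Correctness of the proof-of-possession verification (Eq. (6)) in the IHT-based DPDP scheme with public verifiability and data privacy: let I be a finite set of challenged indices, for each i ∈ I let H_i ∈ G₁ be the hash value H(i, vnb_i) of the rank and version number of the block m_i = (m_{i,1}, …, m_{i,s}), and let the tag T_{m_i} ∈ G₁ satisfy T_{m_i}^a = H_i · ∏_{j=1}^s h_j^{m_{i,j}}. For challenge coefficients v_i ∈ ℤ and randomness r_j ∈ ℤ, set R_j = h_j^{r_j}, B_j = h_j^{(∑_{i∈I} m_{i,j}·v_i) + r_j}, and c = ∏_{i∈I} T_{m_i}^{v_i}. Then e(c, g₂^a) · e(∏_{j=1}^s R_j, g₂) = e(∏_{i∈I} H_i^{v_i}, g₂) · e(∏_{j=1}^s B_j, g₂). -/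

import Mathlib

/-!
Raising the aggregated tag `c = ∏ T_i ^ v_i` to the secret key `a` and applying the tag
relation blockwise gives `c ^ a = (∏ H_i ^ v_i) * ∏ h_j ^ (∑ m_ij v_i)`; multiplying by the
masks `R_j = h_j ^ r_j` turns the second factor into `∏ B_j`. Bilinearity moves the exponent `a`
from `g₂ ^ a` to `c` and merges the two pairings on each side, so Eq. (6) follows from this
identity in `G₁`.
-/

open Finset

lemma Finset.prod_zpow_eq_zpow_sum {ι G : Type*} [CommGroup G] (s : Finset ι) (f : ι → ℤ)
    (x : G) : ∏ i ∈ s, x ^ f i = x ^ ∑ i ∈ s, f i :=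
  cons_induction (by simp) (fun _ _ _ _ ↦ by simp [prod_cons, sum_cons, zpow_add, *]) s

lemma prod_zpow_tag_relation {ι κ G : Type*} [CommGroup G] [Fintype κ] (I : Finset ι)
    (a : ℤ) (h : κ → G) (H T : ι → G) (m : ι → κ → ℤ) (v : ι → ℤ)
    (hT : ∀ i ∈ I, T i ^ a = H i * ∏ j, h j ^ m i j) :
    (∏ i ∈ I, T i ^ v i) ^ a =
      (∏ i ∈ I, H i ^ v i) * ∏ j, h j ^ ∑ i ∈ I, m i j * v i := by
  calc (∏ i ∈ I, T i ^ v i) ^ a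
      = ∏ i ∈ I, (T i ^ a) ^ v i := by
        rw [← prod_zpow]
        exact prod_congr rfl fun i _ ↦ by rw [← zpow_mul, ← zpow_mul, mul_comm]
    _ = ∏ i ∈ I, (H i ^ v i * ∏ j, h j ^ (m i j * v i)) :=
        prod_congr rfl fun i hi ↦ by
          simp only [hT i hi, mul_zpow, ← prod_zpow, zpow_mul]
    _ = (∏ i ∈ I, H i ^ v i) * ∏ j, h j ^ ∑ i ∈ I, m i j * v i := by
        rw [prod_mul_distrib, prod_comm]
        simp only [prod_zpow_eq_zpow_sum]

lemma zpow_left_of_map_mul_left {G₁ G₂ GT : Type*} [Group G₁] [Group GT]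
    (e : G₁ → G₂ → GT) (he₁ : ∀ x y z, e (x * y) z = e x z * e y z)
    (x : G₁) (z : G₂) (n : ℤ) : e (x ^ n) z = e x z ^ n :=
  (MonoidHom.mk' (e · z) (he₁ · · z)).map_zpow x n

lemma zpow_right_of_map_mul_right {G₁ G₂ GT : Type*} [Group G₂] [Group GT]
    (e : G₁ → G₂ → GT) (he₂ : ∀ x z w, e x (z * w) = e x z * e x w)
    (x : G₁) (z : G₂) (n : ℤ) : e x (z ^ n) = e x z ^ n :=
  (MonoidHom.mk' (e x) (he₂ x)).map_zpow z n

/-- Correctness of the proof-of-possession verification (Eq. (6)) in the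
IHT-based DPDP scheme with public verifiability and data privacy. -/
theorem iht_dpdp_checkProof_correct
    {G₁ G₂ GT : Type*} [CommGroup G₁] [CommGroup G₂] [CommGroup GT]
    (e : G₁ → G₂ → GT)
    (he₁ : ∀ x y z, e (x * y) z = e x z * e y z)
    (he₂ : ∀ x z w, e x (z * w) = e x z * e x w)
    (g₂ : G₂) (a : ℤ) (s : ℕ) (h : Fin s → G₁)
    {ι : Type*} (I : Finset ι)
    (H : ι → G₁) (m : ι → Fin s → ℤ) (T : ι → G₁)
    (hT : ∀ i ∈ I, (T i) ^ a = H i * ∏ j, (h j) ^ (m i j))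
    (v : ι → ℤ) (r : Fin s → ℤ)
    (R : Fin s → G₁) (hR : ∀ j, R j = (h j) ^ (r j))
    (B : Fin s → G₁)
    (hB : ∀ j, B j = (h j) ^ ((∑ i ∈ I, m i j * v i) + r j))
    (c : G₁) (hc : c = ∏ i ∈ I, (T i) ^ (v i)) :
    e c (g₂ ^ a) * e (∏ j, R j) g₂ =
      e (∏ i ∈ I, (H i) ^ (v i)) g₂ * e (∏ j, B j) g₂ := by
  have key : c ^ a * ∏ j, R j = (∏ i ∈ I, H i ^ v i) * ∏ j, B j := by
    rw [hc, prod_zpow_tag_relation I a h H T m v hT, mul_assoc, ← prod_mul_distrib]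
    simp only [hR, hB, zpow_add]
  rw [zpow_right_of_map_mul_right e he₂, ← zpow_left_of_map_mul_left e he₁, ← he₁, key, he₁]
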